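/- arXiv:1010.1275 — 2 statements merged into one kernel-verified Lean document; each statement's English description precedes it below -/
import Mathlib

section
/- For each a ∈ ℂ with |a| < 1, the map Φ_a(z₁,z₂,z₃) = ((z₁-a)/(1-conj(a)z₁), (1-|a|²)^{1/4} z₂/(1-conj(a)z₁)^{1/2}, (1-|a|²)^{1/4} z₃/(1-conj(a)z₁)^{1/2}) maps the domain Ω* = {(z₁,z₂,z₃) ∈ ℂ³ : |z₁|² + (|z₂|² + |z₃|²)² < 1} into itself. -/
open Complex

/-- The Catlin-type example domain `Ω* = {|z₁|² + (|z₂|² + |z₃|²)² < 1} ⊆ ℂ³`. -/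
def OmegaStar : Set (ℂ × ℂ × ℂ) :=
  {z : ℂ × ℂ × ℂ | ‖z.1‖^2 + (‖z.2.1‖^2 + ‖z.2.2‖^2)^2 < 1}

/-- The automorphism `Φ_a` of `Ω*`, using the principal branch of the square root
(valid since `Re(1 - conj(a) z₁) > 0` for `|z₁| < 1`). -/
noncomputable def PhiStar (a : ℂ) (z : ℂ × ℂ × ℂ) : ℂ × ℂ × ℂ :=
  ((z.1 - a) / (1 - (starRingEnd ℂ) a * z.1),
   (((1 - ‖a‖^2) ^ ((1:ℝ)/4) : ℝ) : ℂ) * z.2.1 / (1 - (starRingEnd ℂ) a * z.1) ^ ((1:ℂ)/2),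
   (((1 - ‖a‖^2) ^ ((1:ℝ)/4) : ℝ) : ℂ) * z.2.2 / (1 - (starRingEnd ℂ) a * z.1) ^ ((1:ℂ)/2))

/-!
With `w = 1 - conj(a) z₁`, the Möbius identity `|z₁ - a|² + (1 - |a|²)(1 - |z₁|²) = |w|²` and
`|Φ₂|² + |Φ₃|² = (1 - |a|²)^{1/2} (|z₂|² + |z₃|²) / |w|` give the transformation law
`1 - ρ(Φ_a z) = (1 - |a|²)(1 - ρ z) / |w|²` for the defining function `ρ` of `Ω*`,
and its right side is positive on `Ω*`.
-/

noncomputable def rhoStar (z : ℂ × ℂ × ℂ) : ℝ :=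
  ‖z.1‖ ^ 2 + (‖z.2.1‖ ^ 2 + ‖z.2.2‖ ^ 2) ^ 2

theorem mem_OmegaStar_iff {z : ℂ × ℂ × ℂ} : z ∈ OmegaStar ↔ rhoStar z < 1 := Iff.rfl

theorem norm_sub_sq_add_eq_norm_one_sub_conj_mul_sq (a z : ℂ) :
    ‖z - a‖ ^ 2 + (1 - ‖a‖ ^ 2) * (1 - ‖z‖ ^ 2) = ‖1 - starRingEnd ℂ a * z‖ ^ 2 := by
  simp only [Complex.sq_norm, Complex.normSq_apply, Complex.sub_re, Complex.sub_im,
    Complex.mul_re, Complex.mul_im, Complex.one_re, Complex.one_im, Complex.conj_re,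
    Complex.conj_im]
  ring

theorem one_sub_conj_mul_ne_zero {a z : ℂ} (ha : ‖a‖ < 1) (hz : ‖z‖ < 1) :
    1 - starRingEnd ℂ a * z ≠ 0 := by
  rw [sub_ne_zero]
  refine fun h => (h ▸ norm_one (α := ℂ)).not_lt ?_
  rw [norm_mul, Complex.norm_conj]
  nlinarith [norm_nonneg a, norm_nonneg z]

theorem Complex.norm_cpow_one_half (w : ℂ) : ‖w ^ ((1 : ℂ) / 2)‖ = √‖w‖ := by
  rw [Real.sqrt_eq_rpow, ← Complex.norm_cpow_real]
  norm_num

theorem norm_ofReal_mul_div_cpow_one_half_sq (c : ℝ) (z w : ℂ) :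
    ‖(c : ℂ) * z / w ^ ((1 : ℂ) / 2)‖ ^ 2 = c ^ 2 * ‖z‖ ^ 2 / ‖w‖ := by
  rw [norm_div, norm_mul, Complex.norm_cpow_one_half, Complex.norm_real, div_pow, mul_pow,
    Real.norm_eq_abs, sq_abs, Real.sq_sqrt (norm_nonneg w)]

theorem Real.rpow_one_fourth_sq_sq {x : ℝ} (hx : 0 ≤ x) : ((x ^ ((1 : ℝ) / 4)) ^ 2) ^ 2 = x := by
  rw [← pow_mul, one_div]
  exact_mod_cast Real.rpow_inv_natCast_pow hx (n := 4) (by norm_num)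

theorem one_sub_rhoStar_PhiStar {a : ℂ} (ha : ‖a‖ ≤ 1) {z : ℂ × ℂ × ℂ}
    (hw : 1 - starRingEnd ℂ a * z.1 ≠ 0) :
    1 - rhoStar (PhiStar a z) =
      (1 - ‖a‖ ^ 2) * (1 - rhoStar z) / ‖1 - starRingEnd ℂ a * z.1‖ ^ 2 := by
  have hq : (((1 - ‖a‖ ^ 2) ^ ((1 : ℝ) / 4)) ^ 2) ^ 2 = 1 - ‖a‖ ^ 2 :=
    Real.rpow_one_fourth_sq_sq (by nlinarith [norm_nonneg a])
  have hw₀ : ‖1 - starRingEnd ℂ a * z.1‖ ≠ 0 := norm_ne_zero_iff.2 hw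
  have key := norm_sub_sq_add_eq_norm_one_sub_conj_mul_sq a z.1
  simp only [rhoStar, PhiStar]
  rw [norm_div, div_pow, norm_ofReal_mul_div_cpow_one_half_sq,
    norm_ofReal_mul_div_cpow_one_half_sq]
  generalize ‖1 - starRingEnd ℂ a * z.1‖ = r at *
  generalize ((1 - ‖a‖ ^ 2) ^ ((1 : ℝ) / 4)) ^ 2 = p at *
  field_simp
  linear_combination -key - (‖z.2.1‖ ^ 2 + ‖z.2.2‖ ^ 2) ^ 2 * hq

/-- For `‖a‖ < 1`, the map `Φ_a` sends `Ω*` into itself. -/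
theorem PhiStar_mapsTo (a : ℂ) (ha : ‖a‖ < 1) :
    Set.MapsTo (PhiStar a) OmegaStar OmegaStar := by
  intro z hz
  rw [mem_OmegaStar_iff] at hz ⊢
  have hz₁ : ‖z.1‖ < 1 := by
    unfold rhoStar at hz
    nlinarith [sq_nonneg (‖z.2.1‖ ^ 2 + ‖z.2.2‖ ^ 2), norm_nonneg z.1]
  have hw := one_sub_conj_mul_ne_zero ha hz₁
  have hpos : 0 < 1 - rhoStar (PhiStar a z) := by
    rw [one_sub_rhoStar_PhiStar ha.le hw]
    have : 0 < 1 - ‖a‖ ^ 2 := by nlinarith [norm_nonneg a]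
    have : 0 < 1 - rhoStar z := by linarith
    positivity
  linarith
end

section
/- Let Ω ⊂ ℂⁿ be a bounded domain, X ∈ Ω, and φ_j ∈ Aut(Ω) with φ_j(X) → P ∈ ∂Ω. Suppose there is a holomorphic peak function at P. Then φ_j(z) → P for every z ∈ Ω, and the convergence is uniform on compact subsets of Ω. -/
open Filter Metric Set Topology ComplexConjugate

/-- `f` is an automorphism of the domain `Ω ⊆ ℂⁿ`: a biholomorphic self-map. -/
def IsAut {n : ℕ} (Ω : Set (Fin n → ℂ)) (f : (Fin n → ℂ) → (Fin n → ℂ)) : Prop :=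
  DifferentiableOn ℂ f Ω ∧ Set.BijOn f Ω Ω ∧
    ∃ g, DifferentiableOn ℂ g Ω ∧ Set.MapsTo g Ω Ω ∧
      (∀ z ∈ Ω, g (f z) = z) ∧ (∀ z ∈ Ω, f (g z) = z)

/-!
The functions `g_j = f ∘ φ_j` map `Ω` into the unit disc and `g_j(X) → 1`. Composing `g_j`
with the disc automorphism sending `g_j(c)` to `0` and applying the Schwarz lemma gives a
Harnack-type inequality `(R - d) |1 - g(z)| ≤ (R + d) |1 - g(c)|` on balls `B(c, R) ⊆ Ω`,
`d = |z - c|`. Hence the set of points where `g_j → 1` is open and closed in `Ω`, so it is all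
of `Ω`, and the convergence is locally uniform. Finally, since `|f| < 1` on the compact set
`closure Ω` away from `P`, `|f(φ_j z)|` close to `1` forces `φ_j z` close to `P`.
-/

namespace Complex

theorem norm_sub_lt_norm_one_sub_conj_mul {a w : ℂ} (ha : ‖a‖ < 1) (hw : ‖w‖ < 1) :
    ‖w - a‖ < ‖1 - conj a * w‖ := by
  have key : normSq (1 - conj a * w) - normSq (w - a) = (1 - normSq a) * (1 - normSq w) := by
    simp only [normSq_apply, sub_re, sub_im, mul_re, mul_im, one_re, one_im, conj_re, conj_im]
    ring
  have ha' : normSq a < 1 := by rw [normSq_eq_norm_sq]; nlinarith [norm_nonneg a]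
  have hw' : normSq w < 1 := by rw [normSq_eq_norm_sq]; nlinarith [norm_nonneg w]
  rw [← sq_lt_sq₀ (norm_nonneg _) (norm_nonneg _), ← normSq_eq_norm_sq, ← normSq_eq_norm_sq]
  nlinarith

theorem norm_one_sub_conj_mul_le (a : ℂ) {w : ℂ} (hw : ‖w‖ ≤ 1) :
    ‖1 - conj a * w‖ ≤ ‖1 - w‖ + ‖1 - a‖ :=
  calc ‖1 - conj a * w‖ = ‖(1 - w) + w * conj (1 - a)‖ := by
        congr 1; simp only [map_sub, map_one]; ring
    _ ≤ ‖1 - w‖ + ‖w‖ * ‖1 - a‖ := by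
        rw [← RCLike.norm_conj (1 - a), ← norm_mul]; exact norm_add_le _ _
    _ ≤ ‖1 - w‖ + ‖1 - a‖ := by gcongr; exact mul_le_of_le_one_left (norm_nonneg _) hw

end Complex

section Harnack

variable {E : Type*} [NormedAddCommGroup E] [NormedSpace ℂ E] {g : E → ℂ} {c z : E} {R : ℝ}

theorem norm_one_sub_le_of_mapsTo_ball (hd : DifferentiableOn ℂ g (ball c R))
    (hmaps : MapsTo g (ball c R) (ball 0 1)) (hz : z ∈ ball c R) :
    (R - dist z c) * ‖1 - g z‖ ≤ (R + dist z c) * ‖1 - g c‖ := by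
  have hR : 0 < R := pos_of_mem_ball hz
  set a := g c
  have ha : ‖a‖ < 1 := by simpa using hmaps (mem_ball_self hR)
  have hlt : ∀ w ∈ ball c R, ‖g w - a‖ < ‖1 - conj a * g w‖ := fun w hw =>
    Complex.norm_sub_lt_norm_one_sub_conj_mul ha (by simpa using hmaps hw)
  have hden : ∀ w ∈ ball c R, 1 - conj a * g w ≠ 0 := fun w hw =>
    norm_pos_iff.1 ((norm_nonneg _).trans_lt (hlt w hw))
  set s : E → ℂ := fun w => (g w - a) / (1 - conj a * g w)
  have hs : ‖s z‖ * R ≤ dist z c := by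
    have hsd : DifferentiableOn ℂ s (ball c R) :=
      (hd.sub_const a).fun_mul (((differentiableOn_const 1).sub (hd.const_mul _)).fun_inv hden)
    have hsc : s c = 0 := by simp [s, a]
    have hsmaps : MapsTo s (ball c R) (closedBall (s c) 1) := fun w hw => by
      rw [hsc, mem_closedBall_zero_iff, norm_div]
      exact div_le_one_of_le₀ (hlt w hw).le (norm_nonneg _)
    have schwarz := Complex.dist_le_div_mul_dist_of_mapsTo_ball hsd hsmaps hz
    rwa [hsc, dist_zero_right, div_mul_eq_mul_div, one_mul, le_div_iff₀ hR] at schwarz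
  have hgz : ‖g z - a‖ = ‖s z‖ * ‖1 - conj a * g z‖ := by
    rw [← norm_mul, div_mul_cancel₀ _ (hden z hz)]
  have h₁ : ‖1 - g z‖ ≤ ‖1 - a‖ + ‖g z - a‖ := by
    simpa only [norm_sub_rev a] using norm_sub_le_norm_sub_add_norm_sub 1 a (g z)
  have h₂ := Complex.norm_one_sub_conj_mul_le a (mem_ball_zero_iff.1 (hmaps hz)).le
  nlinarith [mul_le_mul_of_nonneg_right hs (norm_nonneg (1 - conj a * g z)),
    mul_le_mul_of_nonneg_left h₂ (dist_nonneg : 0 ≤ dist z c),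
    mul_le_mul_of_nonneg_left h₁ hR.le]

theorem norm_one_sub_le_three_mul (hd : DifferentiableOn ℂ g (ball c R))
    (hmaps : MapsTo g (ball c R) (ball 0 1)) (hz : z ∈ ball c (R / 2)) :
    ‖1 - g z‖ ≤ 3 * ‖1 - g c‖ := by
  have hR : 0 < R := by linarith [pos_of_mem_ball hz]
  have hzc : dist z c < R / 2 := hz
  have := norm_one_sub_le_of_mapsTo_ball hd hmaps (ball_subset_ball (by linarith) hz)
  nlinarith [norm_nonneg (1 - g z), norm_nonneg (1 - g c), (dist_nonneg : 0 ≤ dist z c)]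

variable {ι : Type*} {l : Filter ι} {g : ι → E → ℂ}

theorem tendstoUniformlyOn_ball_half_of_mapsTo_ball
    (hd : ∀ i, DifferentiableOn ℂ (g i) (ball c R))
    (hmaps : ∀ i, MapsTo (g i) (ball c R) (ball 0 1)) (hc : Tendsto (g · c) l (𝓝 1)) :
    TendstoUniformlyOn g (fun _ => 1) l (ball c (R / 2)) := by
  rw [Metric.tendstoUniformlyOn_iff]
  intro ε hε
  filter_upwards [Metric.tendsto_nhds.1 hc (ε / 3) (by positivity)] with i hi z hz
  calc dist 1 (g i z) = ‖1 - g i z‖ := dist_eq_norm _ _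
    _ ≤ 3 * ‖1 - g i c‖ := norm_one_sub_le_three_mul (hd i) (hmaps i) hz
    _ < ε := by rw [← dist_eq_norm, dist_comm]; linarith

theorem tendstoLocallyUniformlyOn_one_of_mapsTo_ball {Ω : Set E} (hΩ : IsOpen Ω)
    (hΩc : IsPreconnected Ω) (hd : ∀ i, DifferentiableOn ℂ (g i) Ω)
    (hmaps : ∀ i, MapsTo (g i) Ω (ball 0 1)) {x₀ : E} (hx₀ : x₀ ∈ Ω)
    (h : Tendsto (g · x₀) l (𝓝 1)) :
    TendstoLocallyUniformlyOn g (fun _ => 1) l Ω := by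
  have hball : ∀ {c R}, ball c R ⊆ Ω → Tendsto (g · c) l (𝓝 1) →
      TendstoUniformlyOn g (fun _ => 1) l (ball c (R / 2)) := fun hsub hc =>
    tendstoUniformlyOn_ball_half_of_mapsTo_ball (fun i => (hd i).mono hsub)
      (fun i => (hmaps i).mono_left hsub) hc
  have hpt : ∀ x ∈ Ω, Tendsto (g · x) l (𝓝 1) := by
    refine fun x hx => hΩc.induction₂'
      (fun x y => Tendsto (g · x) l (𝓝 1) → Tendsto (g · y) l (𝓝 1)) (fun x hx => ?_)
      (fun _ _ _ _ _ _ hxy hyz => hyz ∘ hxy) hx₀ hx h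
    obtain ⟨R, hR, hsub⟩ := Metric.isOpen_iff.1 hΩ x hx
    filter_upwards [mem_nhdsWithin_of_mem_nhds (ball_mem_nhds x (by positivity : 0 < R / 4))]
      with y hy
    have hyx : dist y x < R / 4 := hy
    refine ⟨fun hx' => (hball hsub hx').tendsto_at (ball_subset_ball (by linarith) hy),
      fun hy' => (hball (R := R / 2) ((ball_subset_ball' ?_).trans hsub) hy').tendsto_at ?_⟩
    · linarith
    · rw [mem_ball, dist_comm]; linarith
  refine tendstoLocallyUniformlyOn_of_forall_exists_nhds fun x hx => ?_
  obtain ⟨R, hR, hsub⟩ := Metric.isOpen_iff.1 hΩ x hx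
  exact ⟨ball x (R / 2), mem_nhdsWithin_of_mem_nhds (ball_mem_nhds x (half_pos hR)),
    hball hsub (hpt x hx)⟩

end Harnack

theorem IsCompact.tendstoUniformlyOn_const_of_peak {α Y ι : Type*} [PseudoMetricSpace Y]
    {C : Set Y} (hC : IsCompact C) {f : Y → ℂ} (hf : ContinuousOn f C) {P : Y}
    (hpeak : ∀ z ∈ C, z ≠ P → ‖f z‖ < 1) {l : Filter ι} {F : ι → α → Y} {K : Set α}
    (hF : ∀ i, MapsTo (F i) K C)
    (h : TendstoUniformlyOn (fun i z => f (F i z)) (fun _ => 1) l K) :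
    TendstoUniformlyOn F (fun _ => P) l K := by
  rw [Metric.tendstoUniformlyOn_iff] at h ⊢
  intro ε hε
  obtain ⟨δ, hδ, hclose⟩ : ∃ δ > 0, ∀ w ∈ C, 1 - δ < ‖f w‖ → dist P w < ε := by
    rcases (C \ ball P ε).eq_empty_or_nonempty with hempty | hne
    · refine ⟨1, one_pos, fun w hw _ => ?_⟩
      by_contra hfar
      exact (eq_empty_iff_forall_notMem.1 hempty) w ⟨hw, by rwa [mem_ball']⟩
    · obtain ⟨w₀, hw₀, hmax⟩ :=
        (hC.diff isOpen_ball).exists_isMaxOn hne (hf.mono sdiff_subset).norm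
      have hw₀P : w₀ ≠ P := fun he => hw₀.2 (he ▸ mem_ball_self hε)
      refine ⟨1 - ‖f w₀‖, sub_pos.2 (hpeak w₀ hw₀.1 hw₀P), fun w hw hfw => ?_⟩
      by_contra hfar
      have : ‖f w‖ ≤ ‖f w₀‖ := hmax ⟨hw, by rwa [mem_ball']⟩
      linarith
  filter_upwards [h δ hδ] with i hi z hz
  refine hclose _ (hF i hz) ?_
  have := norm_sub_norm_le (1 : ℂ) (f (F i z))
  rw [norm_one, ← dist_eq_norm] at this
  linarith [hi z hz]

/-- Let `Ω ⊆ ℂⁿ` be a bounded domain, `X ∈ Ω`, and `φ_j ∈ Aut(Ω)` with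
`φ_j(X) → P ∈ ∂Ω`. If there is a holomorphic peak function at `P`, then `φ_j → P`
uniformly on every compact subset of `Ω` (in particular pointwise on `Ω`). -/
theorem orbit_tendsto_uniformly_to_peak_point {n : ℕ} (Ω : Set (Fin n → ℂ))
    (hopen : IsOpen Ω) (hconn : IsConnected Ω) (hbdd : Bornology.IsBounded Ω)
    (X : Fin n → ℂ) (hX : X ∈ Ω)
    (φ : ℕ → (Fin n → ℂ) → (Fin n → ℂ)) (hφ : ∀ j, IsAut Ω (φ j))
    (P : Fin n → ℂ) (hP : P ∈ frontier Ω)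
    (hlim : Tendsto (fun j => φ j X) atTop (nhds P))
    (f : (Fin n → ℂ) → ℂ) (U : Set (Fin n → ℂ)) (hU : IsOpen U)
    (hUΩ : closure Ω ⊆ U) (hf : DifferentiableOn ℂ f U)
    (hfP : f P = 1) (hfpeak : ∀ z ∈ closure Ω, z ≠ P → ‖f z‖ < 1) :
    ∀ K ⊆ Ω, IsCompact K →
      TendstoUniformlyOn (fun j => φ j) (fun _ => P) atTop K := by
  intro K hKΩ hK
  have hφΩ : ∀ j, MapsTo (φ j) Ω Ω := fun j => (hφ j).2.1.mapsTo
  have hPΩ : P ∉ Ω := (hopen.frontier_eq ▸ hP).2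
  have hmaps : ∀ j, MapsTo (fun z => f (φ j z)) Ω (ball 0 1) := fun j z hz =>
    mem_ball_zero_iff.2 <|
      hfpeak _ (subset_closure (hφΩ j hz)) (ne_of_mem_of_not_mem (hφΩ j hz) hPΩ)
  have hdiff : ∀ j, DifferentiableOn ℂ (fun z => f (φ j z)) Ω := fun j =>
    hf.comp (hφ j).1 fun z hz => hUΩ (subset_closure (hφΩ j hz))
  have hfX : Tendsto (fun j => f (φ j X)) atTop (𝓝 1) := hfP ▸
    ((hf.continuousOn.continuousAt (hU.mem_nhds (hUΩ (frontier_subset_closure hP)))).tendsto.comp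
      hlim)
  have hunif := (tendstoLocallyUniformlyOn_iff_tendstoUniformlyOn_of_compact hK).1 <|
    (tendstoLocallyUniformlyOn_one_of_mapsTo_ball hopen hconn.isPreconnected hdiff hmaps hX
      hfX).mono hKΩ
  exact hbdd.isCompact_closure.tendstoUniformlyOn_const_of_peak (hf.continuousOn.mono hUΩ) hfpeak
    (fun j z hz => subset_closure (hφΩ j (hKΩ hz))) hunif
end
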